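/- (Linear channel simulation from a bin index.) Let F be a finite field, 𝒳 = F^ℓ, and let X([n]) be n i.i.d. copies of a uniform random variable on 𝒳, viewed as a vector in F^{nℓ}. Let R < ℓ·log₂|F| and δ > 0, set m = ⌊nR/log₂|F|⌋, and define the linear random binning B = A·X([n]) + V ∈ F^m, where the entries of the matrix A ∈ F^{m×nℓ} and the vector V ∈ F^m are mutually independent and uniform on F. Let T be uniform on F^{d} with d = ⌈n(ℓ·log₂|F| − R + δ)/log₂|F|⌉, independent of everything else. Then there exists η > 0 such that for all sufficiently large n, for each realization of (A, V) there exists an affine linear simulation function φ(T, B) (of the form φ(t, b) = Q(b − V) + N·t for matrices Q, N over F) such that, defining p̃_{X([n])|B}(xⁿ|b) = (1/|F|^d)·∑_t 𝟙[φ(t,b) = xⁿ], one has 𝔼_{A,V} ‖ p_B · p_{X([n])|B} − p_B · p̃_{X([n])|B} ‖₁ ≤ 2^{−ηn}. Moreover, for every n this expected total variation distance is at most the probability that rank(A) < n(R − δ')/log₂|F| for the appropriate δ' = δ. -/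

import Mathlib

open Finset

noncomputable section

/-- Bin-index length `m = ⌊nR / log₂ q⌋` (with `q = |F|`). -/
def mdim (q : ℕ) (R : ℝ) (n : ℕ) : ℕ := ⌊(n : ℝ) * R / Real.logb 2 q⌋₊

/-- Randomness length `d = ⌈n(ℓ·log₂ q − R + δ) / log₂ q⌉` (with `q = |F|`). -/
def ddim (q ℓ : ℕ) (R δ : ℝ) (n : ℕ) : ℕ :=
  ⌈(n : ℝ) * ((ℓ : ℝ) * Real.logb 2 q - R + δ) / Real.logb 2 q⌉₊

/-- Total variation distance between the true joint pmf of `(B, X([n]))`, where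
`X([n])` is uniform on `F^{n×ℓ}` (n i.i.d. uniform copies on `F^ℓ`, flattened) and
`B = A·X([n]) + V`, and the simulated joint pmf `p_B · p̃_{X([n])|B}` obtained from the
affine linear simulator `φ(τ, b) = Q(b − V) + N·τ` with `τ` uniform on `F^d`. -/
def tvSimLin {F : Type} [Field F] [Fintype F] [DecidableEq F] (ℓ : ℕ) (R δ : ℝ)
    (n : ℕ)
    (AV : Matrix (Fin (mdim (Fintype.card F) R n)) (Fin n × Fin ℓ) F ×
      (Fin (mdim (Fintype.card F) R n) → F))
    (QN : Matrix (Fin n × Fin ℓ) (Fin (mdim (Fintype.card F) R n)) F ×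
      Matrix (Fin n × Fin ℓ) (Fin (ddim (Fintype.card F) ℓ R δ n)) F) : ℝ :=
  2⁻¹ * ∑ b : Fin (mdim (Fintype.card F) R n) → F, ∑ x : Fin n × Fin ℓ → F,
    |(if AV.1.mulVec x + AV.2 = b then (Fintype.card (Fin n × Fin ℓ → F) : ℝ)⁻¹ else 0) -
      (((univ.filter (fun y : Fin n × Fin ℓ → F => AV.1.mulVec y + AV.2 = b)).card : ℝ) /
          (Fintype.card (Fin n × Fin ℓ → F) : ℝ)) *
        (((Fintype.card F : ℝ) ^ ddim (Fintype.card F) ℓ R δ n)⁻¹ *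
          ((univ.filter (fun τ : Fin (ddim (Fintype.card F) ℓ R δ n) → F =>
            QN.1.mulVec (b - AV.2) + QN.2.mulVec τ = x)).card : ℝ))|

/-- Expected (over the uniformly random matrix `A` and vector `V`) total variation
distance, when the affine linear simulator `(Q, N)` is chosen as a function of the
realization `(A, V)`. -/
def EtvSimLin {F : Type} [Field F] [Fintype F] [DecidableEq F] (ℓ : ℕ) (R δ : ℝ)
    (n : ℕ)
    (QN : (Matrix (Fin (mdim (Fintype.card F) R n)) (Fin n × Fin ℓ) F ×
        (Fin (mdim (Fintype.card F) R n) → F)) →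
      Matrix (Fin n × Fin ℓ) (Fin (mdim (Fintype.card F) R n)) F ×
        Matrix (Fin n × Fin ℓ) (Fin (ddim (Fintype.card F) ℓ R δ n)) F) : ℝ :=
  (Fintype.card (Matrix (Fin (mdim (Fintype.card F) R n)) (Fin n × Fin ℓ) F ×
      (Fin (mdim (Fintype.card F) R n) → F)) : ℝ)⁻¹ *
    ∑ AV : Matrix (Fin (mdim (Fintype.card F) R n)) (Fin n × Fin ℓ) F ×
        (Fin (mdim (Fintype.card F) R n) → F),
      tvSimLin ℓ R δ n AV (QN AV)

/-! If `dim ker A ≤ d`, the simulator can be made exact: with `Q` a right inverse of `A` on its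
range and `N` a map from `F^d` onto `ker A`, the point `Q (b - V) + N τ` is uniform on the fibre
`{x | A x + V = b}`, which is the true conditional law of `X([n])` given `B = b`. Otherwise the
total variation distance is at most `1`, so the expected distance is at most
`P(rank A + d < nℓ)`, and the choice of `d` makes `nℓ - d ≤ n(R - δ)/log₂ q`.

Double counting the pairs `(A, c)` with `c ≠ 0` and `c A = 0` bounds this probability by
`q⁻ᵈ ≤ 2^(-δn)`: a matrix of rank `< nℓ - d` has at least `q^(m + d - nℓ)` nonzero left-kernel
vectors, while a fixed `c ≠ 0` annihilates exactly a `q^(-nℓ)` fraction of all matrices. -/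

open Module Matrix

section Fibres

variable {F M N : Type*} [Field F] [Fintype F] [AddCommGroup M] [Module F M] [Fintype M]
  [AddCommGroup N] [Module F N] [DecidableEq N]

theorem LinearMap.card_filter_apply_eq_of_mem_range (f : M →ₗ[F] N) {c : N}
    (hc : c ∈ LinearMap.range f) :
    #{x | f x = c} = Fintype.card F ^ finrank F (LinearMap.ker f) := by
  obtain ⟨x₀, rfl⟩ := hc
  let e : {x // f x = f x₀} ≃ LinearMap.ker f :=
    { toFun x := ⟨x - x₀, by simp [x.2]⟩
      invFun z := ⟨z + x₀, by simp⟩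
      left_inv x := by simp
      right_inv z := by simp }
  rw [← Fintype.card_subtype, ← Nat.card_eq_fintype_card, Nat.card_congr e,
    natCard_eq_pow_finrank (K := F), Nat.card_eq_fintype_card]

omit [Fintype F] in
theorem LinearMap.card_filter_apply_eq_of_notMem_range (f : M →ₗ[F] N) {c : N}
    (hc : c ∉ LinearMap.range f) : #{x | f x = c} = 0 := by
  rw [Finset.card_eq_zero, Finset.filter_eq_empty_iff]
  exact fun x _ hx => hc ⟨x, hx⟩

end Fibres

section Inverses

variable {F M N : Type*} [Field F] [AddCommGroup M] [Module F M] [AddCommGroup N] [Module F N]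

theorem LinearMap.exists_rightInvOn_range (f : M →ₗ[F] N) :
    ∃ g : N →ₗ[F] M, Set.RightInvOn g f (LinearMap.range f) := by
  obtain ⟨s, hs⟩ := f.rangeRestrict.exists_rightInverse_of_surjective f.range_rangeRestrict
  obtain ⟨g, hg⟩ := LinearMap.exists_extend s
  refine ⟨g, fun y hy => ?_⟩
  have := congrArg Subtype.val (LinearMap.congr_fun hs ⟨y, hy⟩)
  simpa [← hg] using this

theorem Submodule.exists_range_eq_of_finrank_le [FiniteDimensional F M] (p : Submodule F M)
    {d : ℕ} (hd : finrank F p ≤ d) : ∃ g : (Fin d → F) →ₗ[F] M, LinearMap.range g = p := by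
  let onto : (Fin d → F) →ₗ[F] p :=
    (finBasis F p).equivFun.symm.toLinearMap ∘ₗ LinearMap.funLeft F F (Fin.castLE hd)
  have h_onto : Function.Surjective onto :=
    (finBasis F p).equivFun.symm.surjective.comp
      (LinearMap.funLeft_surjective_of_injective F F _ (Fin.castLE_injective hd))
  refine ⟨p.subtype ∘ₗ onto, ?_⟩
  rw [LinearMap.range_comp_of_range_eq_top _ (LinearMap.range_eq_top.mpr h_onto),
    Submodule.range_subtype]

end Inverses

section Simulation

variable {F : Type*} [Field F] [Fintype F] [DecidableEq F]
  {m ι : Type*} [Fintype m] [DecidableEq m] [Fintype ι] [DecidableEq ι] {d : ℕ}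

/- `jointPmf`, `binPmf` and `simCondPmf` are the paper's `p_{B,X([n])}(b, x)`, `p_B(b)` and
`p̃_{X([n])|B}(x | b)`; the last one only depends on `b' = b - V`. -/
def jointPmf (A : Matrix m ι F) (V b : m → F) (x : ι → F) : ℝ :=
  if A *ᵥ x + V = b then (Fintype.card (ι → F) : ℝ)⁻¹ else 0

def binPmf (A : Matrix m ι F) (V b : m → F) : ℝ :=
  (#{y | A *ᵥ y + V = b} : ℝ) / Fintype.card (ι → F)

def simCondPmf (Q : Matrix ι m F) (N : Matrix ι (Fin d) F) (b' : m → F) (x : ι → F) : ℝ :=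
  ((Fintype.card F : ℝ) ^ d)⁻¹ * #{τ | Q *ᵥ b' + N *ᵥ τ = x}

def simTV (A : Matrix m ι F) (V : m → F) (Q : Matrix ι m F) (N : Matrix ι (Fin d) F) : ℝ :=
  2⁻¹ * ∑ b, ∑ x, |jointPmf A V b x - binPmf A V b * simCondPmf Q N (b - V) x|

theorem sum_card_filter_apply_eq {α β : Type*} [Fintype α] [Fintype β] [DecidableEq β]
    (g : α → β) : ∑ y, (#{a | g a = y} : ℝ) = Fintype.card α := by
  rw [← Nat.cast_sum, ← card_eq_sum_card_fiberwise (fun a _ => mem_univ (g a)), card_univ]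

theorem sum_jointPmf (A : Matrix m ι F) (V : m → F) : ∑ b, ∑ x, jointPmf A V b x = 1 := by
  rw [sum_comm]
  simp [jointPmf]

theorem sum_binPmf (A : Matrix m ι F) (V : m → F) : ∑ b, binPmf A V b = 1 := by
  simp only [binPmf, ← sum_div, sum_card_filter_apply_eq]
  exact div_self (by positivity)

omit [DecidableEq m] in
theorem sum_simCondPmf (Q : Matrix ι m F) (N : Matrix ι (Fin d) F) (b' : m → F) :
    ∑ x, simCondPmf Q N b' x = 1 := by
  simp [simCondPmf, ← mul_sum, sum_card_filter_apply_eq]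

theorem simTV_le_one (A : Matrix m ι F) (V : m → F) (Q : Matrix ι m F) (N : Matrix ι (Fin d) F) :
    simTV A V Q N ≤ 1 := by
  have h_nonneg : ∀ b x, 0 ≤ binPmf A V b * simCondPmf Q N (b - V) x := fun b x => by
    unfold binPmf simCondPmf; positivity
  have h_joint_nonneg : ∀ b x, 0 ≤ jointPmf A V b x := fun b x => by
    unfold jointPmf; split_ifs <;> positivity
  have h_sum : ∑ b, ∑ x, |jointPmf A V b x - binPmf A V b * simCondPmf Q N (b - V) x| ≤ 2 :=
    calc _ ≤ ∑ b, ∑ x, (jointPmf A V b x + binPmf A V b * simCondPmf Q N (b - V) x) := by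
          gcongr with b _ x
          exact (abs_sub _ _).trans_eq (by rw [abs_of_nonneg (h_joint_nonneg b x),
            abs_of_nonneg (h_nonneg b x)])
      _ = 2 := by
          simp only [sum_add_distrib, sum_jointPmf, ← mul_sum, sum_simCondPmf, mul_one, sum_binPmf]
          norm_num
  unfold simTV
  linarith

omit [DecidableEq m] in
theorem jointPmf_eq_binPmf_mul_simCondPmf (A : Matrix m ι F) (V : m → F) (Q : Matrix ι m F)
    (N : Matrix ι (Fin d) F)
    (hQ : Set.RightInvOn Q.mulVecLin A.mulVecLin (LinearMap.range A.mulVecLin))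
    (hN : LinearMap.range N.mulVecLin = LinearMap.ker A.mulVecLin) (b : m → F) (x : ι → F) :
    jointPmf A V b x = binPmf A V b * simCondPmf Q N (b - V) x := by
  set f := A.mulVecLin
  have h_joint : (A *ᵥ x + V = b) ↔ f x = b - V := eq_sub_iff_add_eq.symm
  have h_bin : #{y | A *ᵥ y + V = b} = #{y | f y = b - V} := by
    simp only [f, Matrix.mulVecLin_apply, eq_sub_iff_add_eq]
  have h_sim : #{τ | Q *ᵥ (b - V) + N *ᵥ τ = x} = #{τ | N.mulVecLin τ = x - Q *ᵥ (b - V)} := by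
    simp only [Matrix.mulVecLin_apply, eq_sub_iff_add_eq, add_comm]
  simp only [jointPmf, binPmf, simCondPmf, h_joint, h_bin, h_sim]
  by_cases hb : b - V ∈ LinearMap.range f
  swap
  · have hx : f x ≠ b - V := fun hx => hb ⟨x, hx⟩
    simp [hx, f.card_filter_apply_eq_of_notMem_range hb]
  have h_ker : x - Q *ᵥ (b - V) ∈ LinearMap.range N.mulVecLin ↔ f x = b - V := by
    rw [hN, LinearMap.mem_ker, map_sub, ← Matrix.mulVecLin_apply, hQ hb, sub_eq_zero]
  by_cases hx : f x = b - V
  · have h_dim : finrank F (LinearMap.ker f) + finrank F (LinearMap.ker N.mulVecLin) = d := by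
      have := N.mulVecLin.finrank_range_add_finrank_ker
      rwa [hN, finrank_fin_fun] at this
    have h_pow : (Fintype.card F : ℝ) ^ d = (Fintype.card F : ℝ) ^ finrank F (LinearMap.ker f) *
        (Fintype.card F : ℝ) ^ finrank F (LinearMap.ker N.mulVecLin) := by
      rw [← pow_add, h_dim]
    rw [if_pos hx, f.card_filter_apply_eq_of_mem_range hb,
      N.mulVecLin.card_filter_apply_eq_of_mem_range (h_ker.mpr hx), h_pow]
    field_simp
    push_cast
    ring
  · rw [if_neg hx, N.mulVecLin.card_filter_apply_eq_of_notMem_range (mt h_ker.mp hx)]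
    simp

theorem exists_simTV_eq_zero (A : Matrix m ι F) (V : m → F)
    (hA : Fintype.card ι ≤ A.rank + d) :
    ∃ (Q : Matrix ι m F) (N : Matrix ι (Fin d) F), simTV A V Q N = 0 := by
  have h_ker : finrank F (LinearMap.ker A.mulVecLin) ≤ d := by
    have := A.mulVecLin.finrank_range_add_finrank_ker
    rw [finrank_pi] at this
    rw [Matrix.rank] at hA
    omega
  obtain ⟨g, hg⟩ := A.mulVecLin.exists_rightInvOn_range
  obtain ⟨G, hG⟩ := (LinearMap.ker A.mulVecLin).exists_range_eq_of_finrank_le h_ker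
  have hQ : (LinearMap.toMatrix' g).mulVecLin = g := Matrix.toLin'_toMatrix' g
  have hN : (LinearMap.toMatrix' G).mulVecLin = G := Matrix.toLin'_toMatrix' G
  refine ⟨LinearMap.toMatrix' g, LinearMap.toMatrix' G, ?_⟩
  simp [simTV, jointPmf_eq_binPmf_mul_simCondPmf A V _ _ (hQ ▸ hg) (hN ▸ hG)]

theorem exists_sum_simTV_le_card_filter (d : ℕ) :
    ∃ QN : Matrix m ι F × (m → F) → Matrix ι m F × Matrix ι (Fin d) F,
      ∑ AV, simTV AV.1 AV.2 (QN AV).1 (QN AV).2 ≤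
        #{AV : Matrix m ι F × (m → F) | AV.1.rank + d < Fintype.card ι} := by
  have h_good : ∀ AV : Matrix m ι F × (m → F), ∃ QN : Matrix ι m F × Matrix ι (Fin d) F,
      Fintype.card ι ≤ AV.1.rank + d → simTV AV.1 AV.2 QN.1 QN.2 = 0 := by
    intro AV
    by_cases hAV : Fintype.card ι ≤ AV.1.rank + d
    · obtain ⟨Q, N, h⟩ := exists_simTV_eq_zero AV.1 AV.2 hAV
      exact ⟨(Q, N), fun _ => h⟩
    · exact ⟨0, fun h => absurd h hAV⟩
  choose QN hQN using h_good
  refine ⟨QN, ?_⟩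
  rw [natCast_card_filter]
  gcongr with AV
  split_ifs with hAV
  · exact simTV_le_one ..
  · exact (hQN AV (by omega)).le

end Simulation

section LowRank

variable {F : Type*} [Field F] [Fintype F] [DecidableEq F]
  {κ ι : Type*} [Fintype κ] [DecidableEq κ] [Fintype ι] [DecidableEq ι]

omit [DecidableEq ι] in
theorem Matrix.card_filter_vecMul_eq_zero (A : Matrix κ ι F) :
    #{c : κ → F | c ᵥ* A = 0} = Fintype.card F ^ (Fintype.card κ - A.rank) := by
  have h_dim := Aᵀ.mulVecLin.finrank_range_add_finrank_ker
  rw [← Matrix.rank, Matrix.rank_transpose, Matrix.mulVecLin_transpose, finrank_pi] at h_dim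
  rw [show #{c : κ → F | c ᵥ* A = 0} = #{c | A.vecMulLinear c = 0} from rfl,
    A.vecMulLinear.card_filter_apply_eq_of_mem_range (zero_mem _)]
  congr
  omega

theorem Matrix.card_filter_vecMul_eq_zero_mul_pow {c : κ → F} (hc : c ≠ 0) :
    #{A : Matrix κ ι F | c ᵥ* A = 0} * Fintype.card F ^ Fintype.card ι =
      Fintype.card F ^ (Fintype.card κ * Fintype.card ι) := by
  let Φ : Matrix κ ι F →ₗ[F] ι → F := Matrix.vecMulBilin F F c
  obtain ⟨i, hi⟩ := Function.ne_iff.mp hc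
  have hΦ : LinearMap.range Φ = ⊤ := by
    refine LinearMap.range_eq_top.mpr fun v => ⟨vecMulVec (Pi.single i (c i)⁻¹) v, ?_⟩
    simp [Φ, Matrix.vecMulBilin_apply, vecMul_vecMulVec, mul_inv_cancel₀ (show c i ≠ 0 from hi)]
  have h_dim := Φ.finrank_range_add_finrank_ker
  rw [hΦ, finrank_top, finrank_pi, finrank_matrix, finrank_self, mul_one] at h_dim
  rw [show #{A : Matrix κ ι F | c ᵥ* A = 0} = #{A | Φ A = 0} from rfl,
    Φ.card_filter_apply_eq_of_mem_range (zero_mem _), ← pow_add, ← h_dim, add_comm]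

theorem Matrix.card_filter_rank_add_lt_mul_pow_le {d : ℕ}
    (hd : Fintype.card ι ≤ Fintype.card κ + d) :
    #{A : Matrix κ ι F | A.rank + d < Fintype.card ι} * Fintype.card F ^ d ≤
      Fintype.card F ^ (Fintype.card κ * Fintype.card ι) := by
  set q := Fintype.card F
  set k := Fintype.card κ
  set N := Fintype.card ι
  have hq : 1 < q := Fintype.one_lt_card
  set s : Finset (Matrix κ ι F) := {A | A.rank + d < N}
  set t : Finset (κ → F) := {c | c ≠ 0}
  let r : Matrix κ ι F → (κ → F) → Prop := fun A c => c ᵥ* A = 0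
  have h_above : ∀ A ∈ s, q ^ (k + d - N) ≤ #(t.bipartiteAbove r A) := by
    intro A hA
    have h_rank : A.rank + d < N := (mem_filter.mp hA).2
    have h_eq : t.bipartiteAbove r A = (({c | c ᵥ* A = 0} : Finset (κ → F))).erase 0 := by
      ext c
      simp [bipartiteAbove, t, r]
    rw [h_eq, card_erase_of_mem (by simp), card_filter_vecMul_eq_zero]
    exact Nat.le_sub_one_of_lt (Nat.pow_lt_pow_right hq (by omega))
  have h_below : ∀ c ∈ t, #(s.bipartiteBelow r c) * q ^ N ≤ q ^ (k * N) := by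
    intro c hc
    rw [← card_filter_vecMul_eq_zero_mul_pow (mem_filter.mp hc).2]
    gcongr
    exact filter_subset_filter _ (subset_univ s)
  have h_count : #s * q ^ d * q ^ k ≤ q ^ (k * N) * q ^ k :=
    calc #s * q ^ d * q ^ k = #s * q ^ (k + d - N) * q ^ N := by
          rw [mul_assoc, mul_assoc, ← pow_add, ← pow_add]
          congr 2
          omega
      _ ≤ (∑ A ∈ s, #(t.bipartiteAbove r A)) * q ^ N := by
          gcongr
          simpa using card_nsmul_le_sum s _ _ h_above
      _ = ∑ c ∈ t, #(s.bipartiteBelow r c) * q ^ N := by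
          rw [sum_card_bipartiteAbove_eq_sum_card_bipartiteBelow, sum_mul]
      _ ≤ ∑ c ∈ t, q ^ (k * N) := sum_le_sum h_below
      _ ≤ q ^ k * q ^ (k * N) := by
          rw [sum_const, smul_eq_mul]
          gcongr
          simpa [q, k] using card_le_univ t
      _ = q ^ (k * N) * q ^ k := mul_comm _ _
  exact Nat.le_of_mul_le_mul_right h_count (by positivity)

theorem Matrix.card_filter_rank_add_lt_div_card_le {d : ℕ}
    (hd : Fintype.card ι ≤ Fintype.card κ + d) :
    (#{AV : Matrix κ ι F × (κ → F) | AV.1.rank + d < Fintype.card ι} : ℝ) /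
        Fintype.card (Matrix κ ι F × (κ → F)) ≤ ((Fintype.card F : ℝ) ^ d)⁻¹ := by
  have h_count := Matrix.card_filter_rank_add_lt_mul_pow_le (F := F) (κ := κ) hd
  have h_card : Fintype.card (Matrix κ ι F) =
      Fintype.card F ^ (Fintype.card κ * Fintype.card ι) := by
    rw [Fintype.card_eq_nat_card]
    simp [Matrix, ← pow_mul, mul_comm]
  have h_prod : #{AV : Matrix κ ι F × (κ → F) | AV.1.rank + d < Fintype.card ι} =
      #{A : Matrix κ ι F | A.rank + d < Fintype.card ι} * Fintype.card (κ → F) := by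
    rw [← card_univ (α := κ → F), ← card_product, ← filter_product_left, univ_product_univ]
  rw [h_prod, Fintype.card_prod, Nat.cast_mul, Nat.cast_mul,
    mul_div_mul_right _ _ (by positivity), h_card, div_le_iff₀ (by positivity),
    ← div_eq_inv_mul, le_div_iff₀ (by positivity)]
  exact_mod_cast h_count

end LowRank

section Dimensions

variable {q ℓ n : ℕ} {R δ : ℝ}

theorem natCast_mul_sub_div_logb_le_ddim (hq : 1 < q) :
    (n * ℓ : ℝ) - n * (R - δ) / Real.logb 2 q ≤ ddim q ℓ R δ n := by
  have hL : Real.logb 2 q ≠ 0 := (Real.logb_pos one_lt_two (by exact_mod_cast hq)).ne'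
  calc (n * ℓ : ℝ) - n * (R - δ) / Real.logb 2 q
      = n * (ℓ * Real.logb 2 q - R + δ) / Real.logb 2 q := by field_simp; ring
    _ ≤ ddim q ℓ R δ n := Nat.le_ceil _

theorem mul_le_mdim_add_ddim (hq : 1 < q) (hδ : 0 ≤ δ) : n * ℓ ≤ mdim q R n + ddim q ℓ R δ n := by
  have hL : 0 < Real.logb 2 q := Real.logb_pos one_lt_two (by exact_mod_cast hq)
  have h_floor : (n * R / Real.logb 2 q : ℝ) < mdim q R n + 1 := Nat.lt_floor_add_one _
  have h_ceil := natCast_mul_sub_div_logb_le_ddim (ℓ := ℓ) (n := n) (R := R) (δ := δ) hq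
  have h_mono : (n * (R - δ) / Real.logb 2 q : ℝ) ≤ n * R / Real.logb 2 q := by
    gcongr; linarith
  have : ((n * ℓ : ℕ) : ℝ) < mdim q R n + ddim q ℓ R δ n + 1 := by push_cast; linarith
  have : n * ℓ < mdim q R n + ddim q ℓ R δ n + 1 := by exact_mod_cast this
  omega

theorem two_rpow_mul_le_pow_ddim (hq : 1 < q) (hR : R ≤ ℓ * Real.logb 2 q) :
    (2 : ℝ) ^ (δ * n) ≤ (q : ℝ) ^ ddim q ℓ R δ n := by
  have hL : 0 < Real.logb 2 q := Real.logb_pos one_lt_two (by exact_mod_cast hq)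
  have h_ceil : δ * n ≤ Real.logb 2 q * ddim q ℓ R δ n := by
    have : (n * (ℓ * Real.logb 2 q - R + δ) / Real.logb 2 q : ℝ) ≤ ddim q ℓ R δ n :=
      Nat.le_ceil _
    rw [div_le_iff₀ hL] at this
    nlinarith [(Nat.cast_nonneg n : (0 : ℝ) ≤ n)]
  calc (2 : ℝ) ^ (δ * n) ≤ (2 : ℝ) ^ (Real.logb 2 q * ddim q ℓ R δ n) :=
        Real.rpow_le_rpow_of_exponent_le one_le_two h_ceil
    _ = (q : ℝ) ^ ddim q ℓ R δ n := by
        rw [Real.rpow_mul zero_le_two, Real.rpow_logb zero_lt_two (by norm_num)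
          (by positivity), Real.rpow_natCast]

end Dimensions

theorem tvSimLin_eq_simTV {F : Type} [Field F] [Fintype F] [DecidableEq F] (ℓ : ℕ) (R δ : ℝ)
    (n : ℕ) (AV : Matrix (Fin (mdim (Fintype.card F) R n)) (Fin n × Fin ℓ) F ×
      (Fin (mdim (Fintype.card F) R n) → F))
    (QN : Matrix (Fin n × Fin ℓ) (Fin (mdim (Fintype.card F) R n)) F ×
      Matrix (Fin n × Fin ℓ) (Fin (ddim (Fintype.card F) ℓ R δ n)) F) :
    tvSimLin ℓ R δ n AV QN = simTV AV.1 AV.2 QN.1 QN.2 := rfl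

theorem exists_EtvSimLin_le {F : Type} [Field F] [Fintype F] [DecidableEq F] (ℓ : ℕ) (R δ : ℝ)
    (n : ℕ) :
    ∃ QN, EtvSimLin (F := F) ℓ R δ n QN ≤
      (#{AV : Matrix (Fin (mdim (Fintype.card F) R n)) (Fin n × Fin ℓ) F ×
          (Fin (mdim (Fintype.card F) R n) → F) |
          AV.1.rank + ddim (Fintype.card F) ℓ R δ n < n * ℓ} : ℝ) /
        Fintype.card (Matrix (Fin (mdim (Fintype.card F) R n)) (Fin n × Fin ℓ) F ×
          (Fin (mdim (Fintype.card F) R n) → F)) := by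
  obtain ⟨QN, hQN⟩ := exists_sum_simTV_le_card_filter (F := F)
    (m := Fin (mdim (Fintype.card F) R n)) (ι := Fin n × Fin ℓ) (ddim (Fintype.card F) ℓ R δ n)
  refine ⟨QN, ?_⟩
  rw [EtvSimLin, div_eq_inv_mul]
  gcongr
  simpa [tvSimLin_eq_simTV] using hQN

/-- **Linear channel simulation from a bin index.** For `X([n])` uniform
on `F^{n×ℓ}`, the affine linear binning `B = A·X([n]) + V` at rate `R < ℓ·log₂|F|`, and
any `δ > 0`: there is `η > 0` so that for all large `n`, affine linear simulators
`φ(τ,b) = Q(b−V) + N·τ` (chosen per realization of `(A,V)`) achieve expected total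
variation distance at most `2^{−ηn}`; moreover for every `n` the expected total
variation distance is at most `P(rank(A) < n(R−δ)/log₂|F|)`. -/
theorem linear_channel_simulation {F : Type} [Field F] [Fintype F] [DecidableEq F]
    (ℓ : ℕ) (R δ : ℝ) (hR : R < (ℓ : ℝ) * Real.logb 2 (Fintype.card F)) (hδ : 0 < δ) :
    (∃ η : ℝ, 0 < η ∧ ∃ N : ℕ, ∀ n ≥ N,
      ∃ QN, EtvSimLin (F := F) ℓ R δ n QN ≤ (2 : ℝ) ^ (-(η * (n : ℝ)))) ∧
    (∀ n : ℕ, ∃ QN, EtvSimLin (F := F) ℓ R δ n QN ≤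
      (Nat.card {AV : Matrix (Fin (mdim (Fintype.card F) R n)) (Fin n × Fin ℓ) F ×
          (Fin (mdim (Fintype.card F) R n) → F) //
          (AV.1.rank : ℝ) < (n : ℝ) * (R - δ) / Real.logb 2 (Fintype.card F)} : ℝ) /
        (Fintype.card (Matrix (Fin (mdim (Fintype.card F) R n)) (Fin n × Fin ℓ) F ×
          (Fin (mdim (Fintype.card F) R n) → F)) : ℝ)) := by
  have hq : 1 < Fintype.card F := Fintype.one_lt_card
  refine ⟨⟨δ, hδ, 0, fun n _ => ?_⟩, fun n => ?_⟩ <;>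
    obtain ⟨QN, hQN⟩ := exists_EtvSimLin_le (F := F) ℓ R δ n <;> refine ⟨QN, hQN.trans ?_⟩
  · have h_dims : Fintype.card (Fin n × Fin ℓ) ≤
        Fintype.card (Fin (mdim (Fintype.card F) R n)) + ddim (Fintype.card F) ℓ R δ n := by
      simpa using mul_le_mdim_add_ddim hq hδ.le
    calc _ ≤ ((Fintype.card F : ℝ) ^ ddim (Fintype.card F) ℓ R δ n)⁻¹ := by
          simpa using Matrix.card_filter_rank_add_lt_div_card_le h_dims
      _ ≤ (2 : ℝ) ^ (-(δ * n)) := by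
          rw [Real.rpow_neg zero_le_two]
          exact inv_anti₀ (by positivity) (two_rpow_mul_le_pow_ddim hq hR.le)
  · gcongr
    rw [Nat.card_eq_fintype_card, Fintype.card_subtype]
    refine mod_cast card_le_card (monotone_filter_right _ fun AV _ h_rank => ?_)
    have h_ddim := natCast_mul_sub_div_logb_le_ddim (ℓ := ℓ) (n := n) (R := R) (δ := δ) hq
    have : (AV.1.rank : ℝ) + ddim (Fintype.card F) ℓ R δ n < n * ℓ := by exact_mod_cast h_rank
    linarith
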